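/- For every integer s ≥ 2 and n = 2^s, M_n ≤ (√2/π²) · π^{log₂ n} / n^{(log₂ n − 1)/2}, where M_n = min over signs b_k ∈ {1,-1} of |∑_{k=0}^{n/4-1} b_k sin((2k+1)π/n)|. -/

import Mathlib

open Real Finset

noncomputable def M (n : ℕ) : ℝ :=
  sInf {x : ℝ | ∃ b : ℕ → ℝ, (∀ k, b k = 1 ∨ b k = -1) ∧
    x = |∑ k ∈ Finset.range (n / 4), b k * Real.sin ((2 * (k : ℝ) + 1) * Real.pi / n)|}

/-! Pairing consecutive terms with opposite signs gives
`sin ((4m+1)θ) - sin ((4m+3)θ) = -2 sin θ cos ((4m+2)θ)`, and when `8Nθ = π` that cosine is the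
sine at the reflected index `N-1-m` and angle `2θ`. Hence a sign vector of length `N` at angle `2θ`
unfolds to one of length `2N` at angle `θ` whose sum is multiplied by `-2 sin θ`, of size at most
`2θ`. For `n = 2^s` this says that doubling `n` multiplies the attainable value by at most `π / n`;
starting from `sin (π/4) = √2/2` at `n = 4` gives `√2 π^(s-2) / 2^(s(s-1)/2)`. -/

theorem Finset.sum_range_two_mul {β : Type*} [AddCommMonoid β] (f : ℕ → β) (N : ℕ) :
    ∑ k ∈ range (2 * N), f k = ∑ m ∈ range N, (f (2 * m) + f (2 * m + 1)) := by
  induction N with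
  | zero => simp
  | succ N ih =>
    rw [show 2 * (N + 1) = 2 * N + 1 + 1 by ring, sum_range_succ, sum_range_succ, sum_range_succ,
      ih, add_assoc]

theorem Real.sin_sub_sin_eq_of_mul_eq_pi {m k θ : ℝ} (h : 8 * (m + k + 1) * θ = π) :
    sin ((4 * m + 1) * θ) - sin ((4 * m + 3) * θ) =
      -2 * sin θ * sin ((2 * k + 1) * (2 * θ)) := by
  have hmean : ((4 * m + 1) * θ + (4 * m + 3) * θ) / 2 = π / 2 - (2 * k + 1) * (2 * θ) := by
    linear_combination h / 2
  have hhalf : ((4 * m + 1) * θ - (4 * m + 3) * θ) / 2 = -θ := by ring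
  rw [sin_sub_sin, hmean, hhalf, sin_neg, cos_pi_div_two_sub]
  ring

theorem Real.two_pow_rpow_div_two (m k : ℕ) : ((2 : ℝ) ^ m) ^ ((k : ℝ) / 2) = √2 ^ (m * k) := by
  rw [show (2 : ℝ) ^ m = √2 ^ (2 * m) by rw [pow_mul, sq_sqrt zero_le_two], ← rpow_natCast,
    ← rpow_mul (sqrt_nonneg 2), ← rpow_natCast]
  congr 1
  push_cast
  ring

noncomputable def oddSineSum (b : ℕ → ℝ) (N : ℕ) (θ : ℝ) : ℝ :=
  ∑ k ∈ range N, b k * sin ((2 * k + 1) * θ)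

theorem M_le_abs_oddSineSum (n : ℕ) {b : ℕ → ℝ} (hb : ∀ k, b k = 1 ∨ b k = -1) :
    M n ≤ |oddSineSum b (n / 4) (π / n)| := by
  simp only [oddSineSum, ← mul_div_assoc]
  exact csInf_le ⟨0, by rintro x ⟨c, -, rfl⟩; positivity⟩ ⟨b, hb, rfl⟩

def doubledSigns (b : ℕ → ℝ) (N k : ℕ) : ℝ := (-1) ^ k * b (N - 1 - k / 2)

theorem doubledSigns_eq_one_or_neg_one {b : ℕ → ℝ} (hb : ∀ k, b k = 1 ∨ b k = -1) (N k : ℕ) :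
    doubledSigns b N k = 1 ∨ doubledSigns b N k = -1 := by
  rcases neg_one_pow_eq_or ℝ k with h | h <;> rcases hb (N - 1 - k / 2) with h' | h' <;>
    simp [doubledSigns, h, h']

theorem oddSineSum_doubledSigns (b : ℕ → ℝ) (N : ℕ) {θ : ℝ} (h : 8 * N * θ = π) :
    oddSineSum (doubledSigns b N) (2 * N) θ = -2 * sin θ * oddSineSum b N (2 * θ) := by
  have hpair : ∀ m ∈ range N,
      doubledSigns b N (2 * m) * sin ((2 * ((2 * m : ℕ) : ℝ) + 1) * θ) +
        doubledSigns b N (2 * m + 1) * sin ((2 * ((2 * m + 1 : ℕ) : ℝ) + 1) * θ) =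
      -2 * sin θ * (b (N - 1 - m) * sin ((2 * ((N - 1 - m : ℕ) : ℝ) + 1) * (2 * θ))) := by
    intro m hm
    have hk : ((N - 1 - m : ℕ) : ℝ) = N - 1 - m := by
      rw [Nat.sub_sub, Nat.cast_sub (by simpa [add_comm] using hm)]
      push_cast; ring
    have htrig := sin_sub_sin_eq_of_mul_eq_pi (m := m) (k := (N - 1 - m : ℕ)) (θ := θ)
      (by rw [hk]; linear_combination h)
    have h2m : 2 * m / 2 = m := by omega
    have h2m1 : (2 * m + 1) / 2 = m := by omega
    have heven : 2 * ((2 * m : ℕ) : ℝ) + 1 = 4 * m + 1 := by push_cast; ring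
    have hodd : 2 * ((2 * m + 1 : ℕ) : ℝ) + 1 = 4 * m + 3 := by push_cast; ring
    simp only [doubledSigns, h2m, h2m1, heven, hodd,
      (even_two_mul m).neg_one_pow, (odd_two_mul_add_one m).neg_one_pow]
    linear_combination b (N - 1 - m) * htrig
  rw [oddSineSum, sum_range_two_mul, sum_congr rfl hpair, ← mul_sum,
    sum_range_reflect (fun k => b k * sin ((2 * (k : ℝ) + 1) * (2 * θ))) N]
  rfl

theorem exists_abs_oddSineSum_le (j : ℕ) :
    ∃ b : ℕ → ℝ, (∀ k, b k = 1 ∨ b k = -1) ∧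
      |oddSineSum b (2 ^ j) (π / 2 ^ (j + 2))| ≤ √2 * π ^ j / √2 ^ ((j + 2) * (j + 1)) := by
  induction j with
  | zero =>
    refine ⟨fun _ => 1, fun _ => Or.inl rfl, ?_⟩
    norm_num [oddSineSum]
    exact (abs_of_nonneg (by positivity)).le
  | succ j ih =>
    obtain ⟨b, hb, hle⟩ := ih
    refine ⟨doubledSigns b (2 ^ j), doubledSigns_eq_one_or_neg_one hb _, ?_⟩
    set θ := π / 2 ^ (j + 1 + 2)
    have hθ : 8 * ((2 ^ j : ℕ) : ℝ) * θ = π := by simp only [θ]; push_cast; field_simp; ring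
    have h2θ : 2 * θ = π / 2 ^ (j + 2) := by simp only [θ]; field_simp; ring
    have hsin : |-2 * sin θ| ≤ π / 2 ^ (j + 2) := by
      rw [abs_mul, abs_neg, abs_two, ← h2θ]
      exact mul_le_mul_of_nonneg_left (abs_sin_le_abs.trans_eq (abs_of_nonneg (by positivity)))
        zero_le_two
    have hsqrt : √2 ^ ((j + 1 + 2) * (j + 1 + 1)) = √2 ^ ((j + 2) * (j + 1)) * 2 ^ (j + 2) := by
      rw [show (j + 1 + 2) * (j + 1 + 1) = (j + 2) * (j + 1) + 2 * (j + 2) by ring, pow_add,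
        pow_mul √2 2, sq_sqrt zero_le_two]
    rw [pow_succ' 2 j, oddSineSum_doubledSigns b _ hθ, h2θ, abs_mul]
    calc |-2 * sin θ| * |oddSineSum b (2 ^ j) (π / 2 ^ (j + 2))|
        ≤ π / 2 ^ (j + 2) * (√2 * π ^ j / √2 ^ ((j + 2) * (j + 1))) :=
          mul_le_mul hsin hle (abs_nonneg _) (by positivity)
      _ = √2 * π ^ (j + 1) / √2 ^ ((j + 1 + 2) * (j + 1 + 1)) := by
          rw [hsqrt]; field_simp; ring

theorem M_asymptotic_bound (s : ℕ) (hs : 2 ≤ s) (n : ℕ) (hn : n = 2 ^ s) :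
    M n ≤ Real.sqrt 2 / Real.pi ^ 2 *
      Real.pi ^ (Real.logb 2 n) / (n : ℝ) ^ ((Real.logb 2 n - 1) / 2) := by
  obtain ⟨j, rfl⟩ := Nat.exists_eq_add_of_le' hs
  subst hn
  obtain ⟨b, hb, hle⟩ := exists_abs_oddSineSum_le j
  have hN : 2 ^ (j + 2) / 4 = 2 ^ j := by rw [pow_add]; simp
  have hlog : logb 2 ((2 ^ (j + 2) : ℕ) : ℝ) = ((j + 2 : ℕ) : ℝ) := by
    rw [Nat.cast_pow, Nat.cast_ofNat, logb_pow, logb_self_eq_one one_lt_two, mul_one]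
  have hexp : ((j + 2 : ℕ) : ℝ) - 1 = ((j + 1 : ℕ) : ℝ) := by push_cast; ring
  calc M (2 ^ (j + 2)) ≤ |oddSineSum b (2 ^ j) (π / 2 ^ (j + 2))| := by
        simpa [hN] using M_le_abs_oddSineSum (2 ^ (j + 2)) hb
    _ ≤ √2 * π ^ j / √2 ^ ((j + 2) * (j + 1)) := hle
    _ = _ := by
        rw [hlog, hexp, rpow_natCast, Nat.cast_pow, Nat.cast_ofNat, two_pow_rpow_div_two, pow_add]
        field_simp
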